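/- arXiv:1103.2501 — 2 statements merged into one kernel-verified Lean document; each statement's English description precedes it below -/
import Mathlib

section
/- Let P1, P2 ≥ 0 and h1, h2 ∈ ℝ satisfy h1^2 ≥ 1 + P1 + P2 and h2^2 ≥ 1 + P1 + P2. Define the achievable region 𝒰 ⊆ ℝ^4 as the set of (R1, R2, R3, R4) with Ri ≥ 0 such that (R1, R2) ∈ 𝒞(P1, P2; 1) ∩ 𝒞(h1^2·P1, h2^2·P2; 1 + P1 + P2) and (R3, R4) ∈ 𝒞(P1, P2; 1) ∩ 𝒞(h1^2·P1, h2^2·P2; 1 + P1 + P2). Then the supremum of R1 + R2 + R3 + R4 over 𝒰 equals log(1 + P1 + P2), and this value is attained by some point of 𝒰. -/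
/-- The Gaussian MAC region for effective received powers `q` and noise power `N`:
all nonnegative rate tuples such that for every nonempty subset `T` of users,
`∑ i in T, R i ≤ (1/2) * log (1 + (∑ i in T, q i) / N)`. -/
def macRegion {ι : Type*} [Fintype ι] (q : ι → ℝ) (N : ℝ) : Set (ι → ℝ) :=
  {R | (∀ i, 0 ≤ R i) ∧
    ∀ T : Finset ι, T.Nonempty →
      ∑ i ∈ T, R i ≤ (1 / 2) * Real.log (1 + (∑ i ∈ T, q i) / N)}

/-!
The sum-rate constraint of `𝒞(P1, P2; 1)` caps each receiver's pair at `½ log (1 + P1 + P2)`,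
and a successive-decoding corner point of `𝒞(P1, P2; 1)` attains the cap. Very strong
interference means `hᵢ² Pᵢ / (1 + P1 + P2) ≥ Pᵢ`: every signal-to-noise ratio of the interference
MAC dominates the corresponding one of `𝒞(P1, P2; 1)`, and the MAC region is monotone in these
ratios, so the corner point is also decodable as interference.
-/

open Real Finset

theorem macRegion_subset_macRegion {ι : Type*} [Fintype ι] {q q' : ι → ℝ} {N N' : ℝ}
    (hq : ∀ i, 0 ≤ q i / N) (hqq' : ∀ i, q i / N ≤ q' i / N') :
    macRegion q N ⊆ macRegion q' N' := by
  rintro R ⟨hR, hsum⟩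
  refine ⟨hR, fun T hT => (hsum T hT).trans ?_⟩
  rw [sum_div, sum_div]
  have hnonneg : 0 ≤ ∑ i ∈ T, q i / N := sum_nonneg fun i _ => hq i
  have hle : ∑ i ∈ T, q i / N ≤ ∑ i ∈ T, q' i / N' := sum_le_sum fun i _ => hqq' i
  gcongr 1 / 2 * log ?_
  linarith

theorem mem_macRegion_fin_two {x y q₁ q₂ N : ℝ} :
    ![x, y] ∈ macRegion ![q₁, q₂] N ↔
      0 ≤ x ∧ 0 ≤ y ∧ x ≤ 1 / 2 * log (1 + q₁ / N) ∧ y ≤ 1 / 2 * log (1 + q₂ / N) ∧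
        x + y ≤ 1 / 2 * log (1 + (q₁ + q₂) / N) := by
  constructor
  · rintro ⟨hR, hsum⟩
    have h₁ := hsum {0} (singleton_nonempty _)
    have h₂ := hsum {1} (singleton_nonempty _)
    have h₁₂ := hsum univ univ_nonempty
    simp only [sum_singleton, Fin.sum_univ_two, Matrix.cons_val_zero, Matrix.cons_val_one]
      at h₁ h₂ h₁₂
    exact ⟨hR 0, hR 1, h₁, h₂, h₁₂⟩
  · rintro ⟨hx, hy, h₁, h₂, h₁₂⟩
    refine ⟨fun i => by fin_cases i <;> assumption, fun T hT => ?_⟩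
    fin_cases T
    · exact absurd hT (by simp)
    · simpa using h₁
    · simpa using h₂
    · simpa using h₁₂

/-- Successive decoding: user 2 is decoded first treating user 1 as noise, then user 1
interference-free. -/
noncomputable def macCorner (q₁ q₂ N : ℝ) : Fin 2 → ℝ :=
  ![1 / 2 * log (1 + q₁ / N), 1 / 2 * log (1 + (q₁ + q₂) / N) - 1 / 2 * log (1 + q₁ / N)]

theorem macCorner_mem_macRegion {q₁ q₂ N : ℝ} (hq₁ : 0 ≤ q₁) (hq₂ : 0 ≤ q₂) (hN : 0 < N) :
    macCorner q₁ q₂ N ∈ macRegion ![q₁, q₂] N := by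
  have h₁ : 0 ≤ q₁ / N := by positivity
  have h₂ : 0 ≤ q₂ / N := by positivity
  have hlog₁ : 0 ≤ log (1 + q₁ / N) := log_nonneg (by linarith)
  have hmono : log (1 + q₁ / N) ≤ log (1 + (q₁ + q₂) / N) := by
    gcongr
    linarith
  have hsubadd : log (1 + (q₁ + q₂) / N) ≤ log (1 + q₁ / N) + log (1 + q₂ / N) := by
    rw [← log_mul (by positivity) (by positivity)]
    gcongr
    rw [add_div]
    nlinarith [mul_nonneg h₁ h₂]
  rw [macCorner, mem_macRegion_fin_two]
  refine ⟨by positivity, ?_, le_rfl, ?_, le_of_eq (by ring)⟩ <;> linarith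

theorem le_sq_mul_div {P S h : ℝ} (hP : 0 ≤ P) (hS : 0 < S) (hh : S ≤ h ^ 2) :
    P ≤ h ^ 2 * P / S := by
  rw [le_div_iff₀ hS]
  nlinarith

/-- under individually very strong interference, the maximal sum rate over
the achievable region `𝒰` equals `log (1 + P1 + P2)`, and it is attained. -/
theorem stmt_2 (P1 P2 h1 h2 : ℝ) (hP1 : 0 ≤ P1) (hP2 : 0 ≤ P2)
    (hh1 : 1 + P1 + P2 ≤ h1 ^ 2) (hh2 : 1 + P1 + P2 ≤ h2 ^ 2) :
    IsGreatest {s : ℝ | ∃ R : Fin 4 → ℝ, (∀ i, 0 ≤ R i) ∧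
      ![R 0, R 1] ∈ macRegion ![P1, P2] 1 ∧
      ![R 0, R 1] ∈ macRegion ![h1 ^ 2 * P1, h2 ^ 2 * P2] (1 + P1 + P2) ∧
      ![R 2, R 3] ∈ macRegion ![P1, P2] 1 ∧
      ![R 2, R 3] ∈ macRegion ![h1 ^ 2 * P1, h2 ^ 2 * P2] (1 + P1 + P2) ∧
      s = R 0 + R 1 + R 2 + R 3}
      (Real.log (1 + P1 + P2)) := by
  have hS : 0 < 1 + P1 + P2 := by linarith
  have hsum : 1 + (P1 + P2) / 1 = 1 + P1 + P2 := by ring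
  constructor
  · set c := macCorner P1 P2 1
    have hc : c ∈ macRegion ![P1, P2] 1 := macCorner_mem_macRegion hP1 hP2 one_pos
    have hc' : c ∈ macRegion ![h1 ^ 2 * P1, h2 ^ 2 * P2] (1 + P1 + P2) := by
      refine macRegion_subset_macRegion (fun i => by fin_cases i <;> simpa) (fun i => ?_) hc
      fin_cases i
      exacts [by simpa using le_sq_mul_div hP1 hS hh1, by simpa using le_sq_mul_div hP2 hS hh2]
    have hpair : ![c 0, c 1] = c := by ext i; fin_cases i <;> rfl
    refine ⟨![c 0, c 1, c 0, c 1], fun i => ?_, ?_, ?_, ?_, ?_, ?_⟩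
    · fin_cases i
      exacts [hc.1 0, hc.1 1, hc.1 0, hc.1 1]
    all_goals simp only [Matrix.cons_val, hpair, hc, hc']
    simp only [c, macCorner, Matrix.cons_val_zero, Matrix.cons_val_one, hsum]
    ring
  · rintro s ⟨R, -, h01, -, h23, -, rfl⟩
    obtain ⟨-, -, -, -, h01⟩ := mem_macRegion_fin_two.1 h01
    obtain ⟨-, -, -, -, h23⟩ := mem_macRegion_fin_two.1 h23
    rw [hsum] at h01 h23
    linarith
end

section
/- Let P1, P2 ≥ 0 and h1, h2 ∈ ℝ satisfy the mixed strong–extremely strong interference conditions h1^2 ≥ 1 and h2^2 ≥ 1 + P1 + P2 + h1^2·P1. Consider the outer-bound region 𝒪 ⊆ ℝ^4 consisting of all (R1, R2, R3, R4) with Ri ≥ 0 such that (R1, R2) ∈ 𝒞(P1, P2; 1), (R3, R4) ∈ 𝒞(P1, P2; 1), (R1, R2, R3) ∈ 𝒞(P1, P2, h1^2·P1; 1), (R1, R2, R4) ∈ 𝒞(P1, P2, h2^2·P2; 1), (R1, R3, R4) ∈ 𝒞(h1^2·P1, P1, P2; 1), and (R2, R3, R4) ∈ 𝒞(h2^2·P2,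 P1, P2; 1). Then 𝒪 equals the region {(R1, R2, R3, R4) ∈ ℝ^4 : Ri ≥ 0, (R1, R2, R3) ∈ 𝒞(P1, P2, h1^2·P1; 1), (R1, R3, R4) ∈ 𝒞(h1^2·P1, P1, P2; 1)}; i.e., under mixed strong–extremely strong interference MSES(1,2), all the remaining constraints of the outer bound are implied by the two three-user MAC constraints involving the strong-interference link. -/
/-!
A receiver that sees users `κ` with powers `r ≥ (1 + ∑ q / N) • q'` on top of a MAC `𝒞(q; N)`
can decode them first, treating the users of `ι` as noise, at any rates that `𝒞(q'; N)` supports,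
because `(1 + a / N) * (1 + b / N) ≤ 1 + (a + c) / N` for all matching sub-sums `a, b, c`.
Under `h2 ^ 2 ≥ 1 + P1 + P2` this applies with `q = (P1, P2)`, `q' = P2`, `r = h2 ^ 2 * P2`, so
both constraints involving the extremely strong link follow from two-user and single-user
constraints, and these are restrictions of the two three-user constraints of the strong link.
-/

open Finset Real

theorem sum_le_of_mem_macRegion {ι : Type*} [Fintype ι] {q R : ι → ℝ} {N : ℝ}
    (hR : R ∈ macRegion q N) (T : Finset ι) :
    ∑ i ∈ T, R i ≤ 1 / 2 * log (1 + (∑ i ∈ T, q i) / N) := by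
  obtain rfl | hT := T.eq_empty_or_nonempty
  · simp
  · exact hR.2 T hT

theorem mem_macRegion_of_embedding {ι κ : Type*} [Fintype ι] [Fintype κ]
    {q R : ι → ℝ} {q' R' : κ → ℝ} {N : ℝ} (hR : R ∈ macRegion q N) (e : κ ↪ ι)
    (hR' : ∀ k, R' k = R (e k)) (hq' : ∀ k, q' k = q (e k)) :
    R' ∈ macRegion q' N := by
  refine ⟨fun k => hR' k ▸ hR.1 (e k), fun T hT => ?_⟩
  simpa only [sum_map, hR', hq'] using hR.2 (T.map e) (hT.map)

theorem sumElim_mem_macRegion {ι κ : Type*} [Fintype ι] [Fintype κ]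
    {q x : ι → ℝ} {q' y : κ → ℝ} {r : ι ⊕ κ → ℝ} {N : ℝ} (hN : 0 < N)
    (hq : ∀ i, 0 ≤ q i) (hq' : ∀ j, 0 ≤ q' j)
    (hr : ∀ S S', (1 + (∑ i ∈ S, q i) / N) * (1 + (∑ j ∈ S', q' j) / N) ≤
      1 + (∑ i ∈ S, r (.inl i) + ∑ j ∈ S', r (.inr j)) / N)
    (hx : x ∈ macRegion q N) (hy : y ∈ macRegion q' N) :
    Sum.elim x y ∈ macRegion r N := by
  refine ⟨Sum.rec hx.1 hy.1, fun T _ => ?_⟩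
  have ha : 0 < 1 + (∑ i ∈ T.toLeft, q i) / N := by
    have := sum_nonneg fun i (_ : i ∈ T.toLeft) => hq i
    positivity
  have hb : 0 < 1 + (∑ j ∈ T.toRight, q' j) / N := by
    have := sum_nonneg fun j (_ : j ∈ T.toRight) => hq' j
    positivity
  rw [sum_sum_eq_sum_toLeft_add_sum_toRight, sum_sum_eq_sum_toLeft_add_sum_toRight]
  calc ∑ i ∈ T.toLeft, x i + ∑ j ∈ T.toRight, y j
      ≤ 1 / 2 * log (1 + (∑ i ∈ T.toLeft, q i) / N) +
          1 / 2 * log (1 + (∑ j ∈ T.toRight, q' j) / N) :=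
        add_le_add (sum_le_of_mem_macRegion hx _) (sum_le_of_mem_macRegion hy _)
    _ = 1 / 2 * log ((1 + (∑ i ∈ T.toLeft, q i) / N) * (1 + (∑ j ∈ T.toRight, q' j) / N)) := by
        rw [log_mul ha.ne' hb.ne']
        ring
    _ ≤ _ := by
        gcongr
        exact hr _ _

theorem sumElim_mem_macRegion_of_mul_le {ι κ : Type*} [Fintype ι] [Fintype κ]
    {q x : ι → ℝ} {q' y : κ → ℝ} {r : κ → ℝ} {N : ℝ} (hN : 0 < N)
    (hq : ∀ i, 0 ≤ q i) (hq' : ∀ j, 0 ≤ q' j) (hr : ∀ j, (1 + (∑ i, q i) / N) * q' j ≤ r j)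
    (hx : x ∈ macRegion q N) (hy : y ∈ macRegion q' N) :
    Sum.elim x y ∈ macRegion (Sum.elim q r) N := by
  refine sumElim_mem_macRegion hN hq hq' (fun S S' => ?_) hx hy
  have hS : ∑ i ∈ S, q i ≤ ∑ i, q i := sum_le_univ_sum_of_nonneg hq
  have hS' : (1 + (∑ i, q i) / N) * ∑ j ∈ S', q' j ≤ ∑ j ∈ S', r j := by
    rw [mul_sum]
    exact sum_le_sum fun j _ => hr j
  have hq'S' : 0 ≤ ∑ j ∈ S', q' j := sum_nonneg fun j _ => hq' j
  simp only [Sum.elim_inl, Sum.elim_inr]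
  calc (1 + (∑ i ∈ S, q i) / N) * (1 + (∑ j ∈ S', q' j) / N)
      = 1 + (∑ i ∈ S, q i) / N + (1 + (∑ i ∈ S, q i) / N) * (∑ j ∈ S', q' j) / N := by ring
    _ ≤ 1 + (∑ i ∈ S, q i) / N + (1 + (∑ i, q i) / N) * (∑ j ∈ S', q' j) / N := by gcongr
    _ ≤ 1 + (∑ i ∈ S, q i) / N + (∑ j ∈ S', r j) / N := by gcongr
    _ = 1 + (∑ i ∈ S, q i + ∑ j ∈ S', r j) / N := by ring

theorem stmt_3_general (P1 P2 h1 h2 : ℝ) (hP1 : 0 ≤ P1) (hP2 : 0 ≤ P2)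
    (hh2 : 1 + P1 + P2 + h1 ^ 2 * P1 ≤ h2 ^ 2) :
    {R : Fin 4 → ℝ | (∀ i, 0 ≤ R i) ∧
      ![R 0, R 1] ∈ macRegion ![P1, P2] 1 ∧
      ![R 2, R 3] ∈ macRegion ![P1, P2] 1 ∧
      ![R 0, R 1, R 2] ∈ macRegion ![P1, P2, h1 ^ 2 * P1] 1 ∧
      ![R 0, R 1, R 3] ∈ macRegion ![P1, P2, h2 ^ 2 * P2] 1 ∧
      ![R 0, R 2, R 3] ∈ macRegion ![h1 ^ 2 * P1, P1, P2] 1 ∧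
      ![R 1, R 2, R 3] ∈ macRegion ![h2 ^ 2 * P2, P1, P2] 1} =
    {R : Fin 4 → ℝ | (∀ i, 0 ≤ R i) ∧
      ![R 0, R 1, R 2] ∈ macRegion ![P1, P2, h1 ^ 2 * P1] 1 ∧
      ![R 0, R 2, R 3] ∈ macRegion ![h1 ^ 2 * P1, P1, P2] 1} := by
  ext R
  constructor
  · rintro ⟨h0, -, -, h012, -, h023, -⟩
    exact ⟨h0, h012, h023⟩
  rintro ⟨h0, h012, h023⟩
  have h01 : ![R 0, R 1] ∈ macRegion ![P1, P2] 1 :=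
    mem_macRegion_of_embedding h012 ⟨![0, 1], by decide⟩
      (by simp [Fin.forall_fin_succ]) (by simp [Fin.forall_fin_succ])
  have h23 : ![R 2, R 3] ∈ macRegion ![P1, P2] 1 :=
    mem_macRegion_of_embedding h023 ⟨![1, 2], by decide⟩
      (by simp [Fin.forall_fin_succ]) (by simp [Fin.forall_fin_succ])
  have h1' : ![R 1] ∈ macRegion ![P2] 1 :=
    mem_macRegion_of_embedding h01 ⟨![1], by decide⟩ (by simp) (by simp)
  have h3' : ![R 3] ∈ macRegion ![P2] 1 :=
    mem_macRegion_of_embedding h23 ⟨![1], by decide⟩ (by simp) (by simp)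
  have hq : ∀ i, 0 ≤ ![P1, P2] i := by simp [Fin.forall_fin_two, hP1, hP2]
  have hq' : ∀ j, 0 ≤ ![P2] j := by simp [hP2]
  have h_exceeds : 1 + (P1 + P2) ≤ h2 ^ 2 := by linarith [mul_nonneg (sq_nonneg h1) hP1]
  have hstrong : ∀ j, (1 + (∑ i, ![P1, P2] i) / 1) * ![P2] j ≤ ![h2 ^ 2 * P2] j := fun _ => by
    simpa using mul_le_mul_of_nonneg_right h_exceeds hP2
  have h013 := sumElim_mem_macRegion_of_mul_le one_pos hq hq' hstrong h01 h3'
  have h123 := sumElim_mem_macRegion_of_mul_le one_pos hq hq' hstrong h23 h1'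
  refine ⟨h0, h01, h23, h012, ?_, h023, ?_⟩
  · exact mem_macRegion_of_embedding h013 ⟨![.inl 0, .inl 1, .inr 0], by decide⟩
      (by simp [Fin.forall_fin_succ]) (by simp [Fin.forall_fin_succ])
  · exact mem_macRegion_of_embedding h123 ⟨![.inr 0, .inl 0, .inl 1], by decide⟩
      (by simp [Fin.forall_fin_succ]) (by simp [Fin.forall_fin_succ])

/-- under mixed strong--extremely strong interference MSES(1,2),
the outer-bound region equals the region cut out by the two three-user MAC
constraints involving the strong-interference link. -/
theorem stmt_3 (P1 P2 h1 h2 : ℝ) (hP1 : 0 ≤ P1) (hP2 : 0 ≤ P2)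
    (hh1 : 1 ≤ h1 ^ 2) (hh2 : 1 + P1 + P2 + h1 ^ 2 * P1 ≤ h2 ^ 2) :
    {R : Fin 4 → ℝ | (∀ i, 0 ≤ R i) ∧
      ![R 0, R 1] ∈ macRegion ![P1, P2] 1 ∧
      ![R 2, R 3] ∈ macRegion ![P1, P2] 1 ∧
      ![R 0, R 1, R 2] ∈ macRegion ![P1, P2, h1 ^ 2 * P1] 1 ∧
      ![R 0, R 1, R 3] ∈ macRegion ![P1, P2, h2 ^ 2 * P2] 1 ∧
      ![R 0, R 2, R 3] ∈ macRegion ![h1 ^ 2 * P1, P1, P2] 1 ∧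
      ![R 1, R 2, R 3] ∈ macRegion ![h2 ^ 2 * P2, P1, P2] 1} =
    {R : Fin 4 → ℝ | (∀ i, 0 ≤ R i) ∧
      ![R 0, R 1, R 2] ∈ macRegion ![P1, P2, h1 ^ 2 * P1] 1 ∧
      ![R 0, R 2, R 3] ∈ macRegion ![h1 ^ 2 * P1, P1, P2] 1} :=
  stmt_3_general P1 P2 h1 h2 hP1 hP2 hh2
end
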